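/- arXiv:0706.0292 — 9 statements merged into one kernel-verified Lean document; each statement's English description precedes it below -/
import Mathlib

section
/- If a set S ⊆ ℤ^k is parametrizable by a single k-tuple of integer-valued polynomials (there exist m and g = (g₁,…,g_k) ∈ (Int(ℤ^m))^k with S = g(ℤ^m)), then S is a finite union of sets, each of which is the image of ℤ^m under a k-tuple of polynomials with integer coefficients; in particular S is a finite union of sets parametrizable by k-tuples of polynomials with integer coefficients. -/
/-!
Choose `D ≠ 0` such that every `D • gᵢ` has integer coefficients. For `r ∈ ℤ^m`, the
polynomial `(D • gᵢ)(r + D x)` is congruent to the constant `(D • gᵢ)(r)` modulo `D`, and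
that constant lies in `Dℤ` because `gᵢ` is integer-valued; hence `gᵢ(r + D x)` has integer
coefficients. The finitely many residue classes `r + Dℤ^m` with `0 ≤ rⱼ < |D|` cover `ℤ^m`.
-/

namespace MvPolynomial

variable {σ : Type*}

def IsIntValued (R : Type*) {K : Type*} [CommSemiring R] [CommSemiring K] [Algebra R K]
    (p : MvPolynomial σ K) : Prop :=
  ∀ a : σ → R, ∃ z : R, eval (fun j => algebraMap R K (a j)) p = algebraMap R K z

variable {R : Type*}

theorem eval_bind₁ [CommSemiring R] {τ : Type*} (f : σ → MvPolynomial τ R) (x : τ → R)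
    (p : MvPolynomial σ R) : eval x (bind₁ f p) = eval (fun i => eval x (f i)) p :=
  eval₂Hom_bind₁ _ _ _ _

theorem C_dvd_bind₁_sub_C_eval [CommRing R] (d : R) (r : σ → R) (p : MvPolynomial σ R) :
    C d ∣ bind₁ (fun j => C (r j) + C d * X j) p - C (eval r p) := by
  induction p using MvPolynomial.induction_on with
  | C a => simp
  | add p q hp hq =>
    simpa only [map_add, add_sub_add_comm] using dvd_add hp hq
  | mul_X p j hp =>
    have hsplit : bind₁ (fun j => C (r j) + C d * X j) (p * X j) - C (eval r (p * X j)) =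
        (bind₁ (fun j => C (r j) + C d * X j) p - C (eval r p)) * (C (r j) + C d * X j) +
          C d * (C (eval r p) * X j) := by
      simp only [map_mul, bind₁_X_right, eval_X]
      ring
    rw [hsplit]
    exact dvd_add (dvd_mul_of_dvd_left hp _) (dvd_mul_right _ _)

theorem exists_C_mul_mem_range_map [CommSemiring R] {S ι : Type*} [CommSemiring S]
    [Algebra R S] (M : Submonoid R) [IsLocalization M S] [Fintype ι]
    (p : ι → MvPolynomial σ S) :
    ∃ b : M, ∀ i, C (algebraMap R S b) * p i ∈ Set.range (map (algebraMap R S)) := by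
  classical
  obtain ⟨b, hb⟩ := IsLocalization.exist_integer_multiples_of_finset M
    (Finset.univ.biUnion fun i => (p i).coeffs)
  refine ⟨b, fun i => mem_range_map_iff_coeffs_subset.mpr fun c hc => ?_⟩
  obtain ⟨n, hn, rfl⟩ := mem_coeffs_iff.mp hc
  rw [mem_support_iff, coeff_C_mul] at hn
  have hmem : coeff n (p i) ∈ Finset.univ.biUnion fun i => (p i).coeffs :=
    Finset.mem_biUnion.mpr ⟨i, Finset.mem_univ _, coeff_mem_coeffs _ (right_ne_zero_of_mul hn)⟩
  obtain ⟨x, hx⟩ := hb _ hmem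
  exact ⟨x, by rw [coeff_C_mul, hx, Algebra.smul_def]⟩

section IsIntValued

variable [CommRing R] {K : Type*} [CommRing K] [IsDomain K] [Algebra R K]
  {p : MvPolynomial σ K} {D : R}

theorem exists_map_eq_bind₁_of_isIntValued (hp : IsIntValued R p) (hD : algebraMap R K D ≠ 0)
    (hDp : C (algebraMap R K D) * p ∈ Set.range (map (algebraMap R K))) (r : σ → R) :
    ∃ F : MvPolynomial σ R, map (algebraMap R K) F =
      bind₁ (fun j => C (algebraMap R K (r j)) + C (algebraMap R K D) * X j) p := by
  obtain ⟨h, hh⟩ := hDp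
  obtain ⟨q, hq⟩ := C_dvd_bind₁_sub_C_eval D r h
  obtain ⟨z, hz⟩ := hp r
  have heval : algebraMap R K (eval r h) = algebraMap R K (D * z) := by
    rw [map_eval, hh, map_mul, eval_C, Function.comp_def, hz, map_mul]
  refine ⟨C z + q, mul_left_cancel₀ (C_ne_zero.mpr hD) ?_⟩
  calc C (algebraMap R K D) * map (algebraMap R K) (C z + q)
      = map (algebraMap R K) (C (eval r h) + C D * q) := by
        simp only [map_add, map_mul, map_C, heval]
        ring
    _ = map (algebraMap R K) (bind₁ (fun j => C (r j) + C D * X j) h) := by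
      rw [sub_eq_iff_eq_add'.mp hq]
    _ = _ := by
      simp only [map_bind₁, hh, map_add, map_mul, map_C, map_X, bind₁_C_right]

theorem exists_eval_eq_eval_add_mul_of_isIntValued (hp : IsIntValued R p)
    (hD : algebraMap R K D ≠ 0)
    (hDp : C (algebraMap R K D) * p ∈ Set.range (map (algebraMap R K))) (r : σ → R) :
    ∃ F : MvPolynomial σ R, ∀ b : σ → R,
      algebraMap R K (eval b F) = eval (fun j => algebraMap R K (r j + D * b j)) p := by
  obtain ⟨F, hF⟩ := exists_map_eq_bind₁_of_isIntValued hp hD hDp r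
  refine ⟨F, fun b => ?_⟩
  rw [map_eval, hF, eval_bind₁]
  simp

end IsIntValued

end MvPolynomial

theorem Int.range_eq_iUnion_range_add_mul {σ α : Type*} (f : (σ → ℤ) → α) {D : ℤ}
    (hD : D ≠ 0) :
    Set.range f =
      ⋃ r : σ → Fin D.natAbs, Set.range fun b : σ → ℤ => f fun j => r j + D * b j := by
  ext v
  simp only [Set.mem_iUnion, Set.mem_range]
  constructor
  · rintro ⟨a, rfl⟩
    have hlt : ∀ j, (a j % D).toNat < D.natAbs := fun j => by
      have := Int.emod_nonneg (a j) hD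
      have := Int.emod_lt (a j) hD
      omega
    refine ⟨fun j => ⟨_, hlt j⟩, fun j => a j / D, congrArg f (funext fun j => ?_)⟩
    simp only [Int.toNat_of_nonneg (Int.emod_nonneg (a j) hD), Int.emod_add_mul_ediv]
  · rintro ⟨r, b, rfl⟩
    exact ⟨_, rfl⟩

/-- B ⇒ C: if `S ⊆ ℤ^k` is the image of `ℤ^m` under a `k`-tuple of integer-valued
polynomials, then `S` is a finite union of sets, each of which is the image of `ℤ^m`
under a `k`-tuple of polynomials with integer coefficients. -/
theorem intValued_param_imp_finite_union_int_poly_param (k m : ℕ) (S : Set (Fin k → ℤ))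
    (g : Fin k → MvPolynomial (Fin m) ℚ)
    (hint : ∀ i, ∀ a : Fin m → ℤ,
      ∃ z : ℤ, MvPolynomial.eval (fun j => (a j : ℚ)) (g i) = (z : ℚ))
    (hS : S = {v : Fin k → ℤ | ∃ a : Fin m → ℤ,
      ∀ i, MvPolynomial.eval (fun j => (a j : ℚ)) (g i) = (v i : ℚ)}) :
    ∃ (N : ℕ) (F : Fin N → Fin k → MvPolynomial (Fin m) ℤ),
      S = ⋃ t : Fin N,
        {v : Fin k → ℤ | ∃ a : Fin m → ℤ, ∀ i, MvPolynomial.eval a (F t i) = v i} := by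
  choose z hz using hint
  have hS_range : S = Set.range fun a i => z i a := by
    rw [hS]
    ext v
    simp [hz, funext_iff]
  obtain ⟨D, hD⟩ := MvPolynomial.exists_C_mul_mem_range_map (nonZeroDivisors ℤ) g
  have hD0 : (D : ℤ) ≠ 0 := nonZeroDivisors.ne_zero D.2
  choose F hF using fun (r : Fin m → Fin (D : ℤ).natAbs) i =>
    MvPolynomial.exists_eval_eq_eval_add_mul_of_isIntValued
      (fun a => ⟨z i a, by simpa using hz i a⟩) (by simp [hD0]) (hD i) fun j => (r j : ℤ)
  have hFz : ∀ r i a, MvPolynomial.eval a (F r i) = z i fun j => r j + D * a j :=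
    fun r i a => Int.cast_injective ((hF r i a).trans (hz i _))
  let e := Fintype.equivFin (Fin m → Fin (D : ℤ).natAbs)
  refine ⟨_, fun t => F (e.symm t), ?_⟩
  rw [hS_range, Int.range_eq_iUnion_range_add_mul _ hD0]
  refine Eq.trans ?_ (e.symm.surjective.iUnion_comp fun r =>
    {v : Fin k → ℤ | ∃ a, ∀ i, MvPolynomial.eval a (F r i) = v i}).symm
  refine Set.iUnion_congr fun r => ?_
  ext v
  simp [hFz, funext_iff]
end

section
/- Let q be a power of a prime and let S ⊆ ℤ^k be a finite union of residue classes of the subgroup qℤ^k in ℤ^k (i.e., S = ⋃_{l=0}^{s} (qℤ^k + a_l) for some a₀,…,a_s ∈ ℤ^k). Then S is parametrizable by a k-tuple of polynomials with integer coefficients: there exist n and f = (f₁,…,f_k) ∈ (ℤ[x₁,…,x_n])^k with S = f(ℤ^n). -/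
/-!
Modulo `q = p ^ e` every integer `t` satisfies `t ^ N ≡ 0` or `t ^ N ≡ 1` with `N = e * φ q`, so
`X₀ ^ N * g + (1 - X₀ ^ N) * c` takes, modulo `q`, exactly the values of `g` together with `c`.
Iterating this over the residues `a₀, …, a_s` gives a polynomial map whose values modulo `q` are
exactly the `a_l mod q`; adding `q * Yᵢ` in fresh variables `Yᵢ` to its `i`-th component turns its
image into the full preimage of those residues, which is `S`.
-/

open MvPolynomial

theorem ZMod.pow_mul_totient_eq_zero_or_one {p : ℕ} (hp : p.Prime) (e : ℕ) (z : ZMod (p ^ e)) :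
    z ^ (e * (p ^ e).totient) = 0 ∨ z ^ (e * (p ^ e).totient) = 1 := by
  have : NeZero (p ^ e) := ⟨pow_ne_zero e hp.ne_zero⟩
  by_cases hz : IsUnit z
  · right
    rw [mul_comm, pow_mul, ← hz.unit_spec, ← Units.val_pow_eq_pow_val, ZMod.pow_totient,
      Units.val_one, one_pow]
  · left
    rw [← z.natCast_zmod_val, ZMod.isUnit_iff_coprime] at hz
    have hpz : p ∣ z.val := by
      by_contra h
      exact hz ((Nat.coprime_comm.mp (hp.coprime_iff_not_dvd.mpr h)).pow_right e)
    have hze : z ^ e = 0 := by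
      rw [← z.natCast_zmod_val, ← Nat.cast_pow, ZMod.natCast_eq_zero_iff]
      exact pow_dvd_pow_of_dvd hpz e
    rw [pow_mul, hze, zero_pow (Nat.totient_pos.mpr (pow_pos hp.pos e)).ne']

theorem setOf_eq_mul_add_eq_preimage_intCast {ι : Type*} (q : ℕ) (a : ι → ℤ) :
    {v : ι → ℤ | ∃ b : ι → ℤ, v = fun i => (q : ℤ) * b i + a i} =
      (fun v i => (v i : ZMod q)) ⁻¹' {fun i => (a i : ZMod q)} := by
  ext v
  simp only [Set.mem_ofPred_eq, Set.mem_preimage, Set.mem_singleton_iff, funext_iff,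
    ZMod.intCast_eq_intCast_iff_dvd_sub, dvd_iff_exists_eq_mul_right]
  constructor
  · rintro ⟨b, hb⟩ i
    exact ⟨-b i, by linarith [hb i]⟩
  · intro h
    choose c hc using h
    exact ⟨fun i => -c i, fun i => by linarith [hc i]⟩

namespace MvPolynomial

variable {R ι : Type*} [CommRing R]

theorem range_eval_pow_mul_rename_add_eq_insert {N : ℕ} (hN : N ≠ 0)
    (hR : ∀ r : R, r ^ N = 0 ∨ r ^ N = 1) {n : ℕ} (g : ι → MvPolynomial (Fin n) R) (c : ι → R) :
    (Set.range fun (x : Fin (n + 1) → R) i =>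
      eval x (X 0 ^ N * rename Fin.succ (g i) + (1 - X 0 ^ N) * C (c i))) =
      insert c (Set.range fun (y : Fin n → R) i => eval y (g i)) := by
  have heval : ∀ (t : R) (y : Fin n → R), (fun i =>
      eval (Fin.cons t y) (X 0 ^ N * rename Fin.succ (g i) + (1 - X 0 ^ N) * C (c i))) =
      fun i => t ^ N * eval y (g i) + (1 - t ^ N) * c i := by
    intro t y
    funext i
    simp [eval_rename, Function.comp_def]
  ext v
  constructor
  · rintro ⟨x, rfl⟩
    dsimp only
    rw [← Fin.cons_self_tail x, heval]
    rcases hR (x 0) with h | h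
    · left; simp [h]
    · right; exact ⟨Fin.tail x, by simp [h]⟩
  · rintro (rfl | ⟨y, rfl⟩)
    · exact ⟨Fin.cons 0 (fun _ => 0), by dsimp only; rw [heval]; simp [zero_pow hN]⟩
    · exact ⟨Fin.cons 1 y, by dsimp only; rw [heval]; simp⟩

theorem exists_range_eval_eq_range {N : ℕ} (hN : N ≠ 0) (hR : ∀ r : R, r ^ N = 0 ∨ r ^ N = 1) :
    ∀ {m : ℕ} (A : Fin (m + 1) → ι → R), ∃ (n : ℕ) (g : ι → MvPolynomial (Fin n) R),
      (Set.range fun (x : Fin n → R) i => eval x (g i)) = Set.range A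
  | 0, A => ⟨0, fun i => C (A 0 i), by
      ext v
      simp [Set.range_unique]⟩
  | m + 1, A => by
      obtain ⟨n, g, hg⟩ := exists_range_eval_eq_range hN hR (Fin.tail A)
      refine ⟨n + 1, _, range_eval_pow_mul_rename_add_eq_insert hN hR g (A 0) |>.trans ?_⟩
      rw [hg, ← Fin.range_cons, Fin.cons_self_tail]

end MvPolynomial

theorem exists_range_eval_eq_preimage_intCast {q n k : ℕ}
    (g : Fin k → MvPolynomial (Fin n) (ZMod q)) :
    ∃ f : Fin k → MvPolynomial (Fin (n + k)) ℤ,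
      (Set.range fun (x : Fin (n + k) → ℤ) i => eval x (f i)) =
        (fun v i => (v i : ZMod q)) ⁻¹' Set.range fun (y : Fin n → ZMod q) i => eval y (g i) := by
  obtain ⟨G, rfl⟩ :=
    (map_surjective (Int.castRingHom (ZMod q)) ZMod.intCast_surjective).comp_left g
  have hG : ∀ (x : Fin n → ℤ) i,
      eval (Int.cast ∘ x) (map (Int.castRingHom (ZMod q)) (G i)) = (eval x (G i) : ZMod q) := by
    intro x i
    rw [eval_map]
    exact (eval₂_comp (Int.castRingHom (ZMod q)) x (G i)).symm
  refine ⟨fun i => C (q : ℤ) * X (Fin.natAdd n i) + rename (Fin.castAdd k) (G i), ?_⟩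
  ext v
  constructor
  · rintro ⟨x, rfl⟩
    refine ⟨Int.cast ∘ x ∘ Fin.castAdd k, funext fun i => ?_⟩
    dsimp only [Function.comp_apply]
    rw [hG]
    simp [eval_rename]
  · rintro ⟨y, hy⟩
    obtain ⟨x, rfl⟩ := ZMod.intCast_surjective.comp_left y
    have hdvd : ∀ i, ∃ b, v i = q * b + eval x (G i) := by
      intro i
      have := congrFun hy i
      dsimp only [Function.comp_apply] at this
      rw [hG, ZMod.intCast_eq_intCast_iff_dvd_sub] at this
      obtain ⟨b, hb⟩ := this
      exact ⟨b, by linarith⟩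
    choose b hb using hdvd
    refine ⟨Fin.addCases x b, funext fun i => ?_⟩
    simp [hb, eval_rename, Function.comp_def]

/-- A finite union of residue classes of `qℤ^k` in `ℤ^k`, where `q` is a prime power,
is parametrizable by a `k`-tuple of polynomials with integer coefficients. -/
theorem union_residue_classes_primePower_param (k : ℕ) (p e q : ℕ) (hp : p.Prime)
    (he : 1 ≤ e) (hq : q = p ^ e) (s : ℕ) (a : Fin (s + 1) → Fin k → ℤ)
    (S : Set (Fin k → ℤ))
    (hS : S = ⋃ l : Fin (s + 1),
      {v : Fin k → ℤ | ∃ b : Fin k → ℤ, v = fun i => (q : ℤ) * b i + a l i}) :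
    ∃ (n : ℕ) (f : Fin k → MvPolynomial (Fin n) ℤ),
      S = {v : Fin k → ℤ | ∃ x : Fin n → ℤ, ∀ i, MvPolynomial.eval x (f i) = v i} := by
  subst hq
  have hN : e * (p ^ e).totient ≠ 0 :=
    Nat.mul_ne_zero (by omega) (Nat.totient_pos.mpr (pow_pos hp.pos e)).ne'
  obtain ⟨n, g, hg⟩ := exists_range_eval_eq_range hN (ZMod.pow_mul_totient_eq_zero_or_one hp e)
    fun l i => (a l i : ZMod (p ^ e))
  obtain ⟨f, hf⟩ := exists_range_eval_eq_preimage_intCast g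
  refine ⟨n + k, f, ?_⟩
  have hrange : {v : Fin k → ℤ | ∃ x : Fin (n + k) → ℤ, ∀ i, eval x (f i) = v i} =
      Set.range fun x i => eval x (f i) := by
    ext v
    simp [funext_iff]
  rw [hS, hrange, hf, hg, ← Set.iUnion_singleton_eq_range, Set.preimage_iUnion]
  simp only [setOf_eq_mul_add_eq_preimage_intCast]
end

section
/- Let n be a natural number, let c be a positive integer that is a common multiple of 1, 2, …, n, and let j be any integer. Then the binomial polynomial binom(cy + j, n) = (cy+j)(cy+j−1)⋯(cy+j−n+1)/n!, regarded as a polynomial in the variable y, has integer coefficients, i.e., lies in ℤ[y]. -/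
/-!
Pascal's rule `binom(x + 1, k + 1) = binom(x, k + 1) + binom(x, k)` moves `j` up and down by one,
so by induction on `k` only `j = 0` needs an argument. There
`binom(c y, k + 1) = (c / (k + 1)) · y · binom(c y - 1, k)`, and `c / (k + 1)` is an integer.
-/

open Polynomial

theorem descPochhammer_succ_comp_X_add_one {R : Type*} [CommRing R] (k : ℕ) :
    (descPochhammer R (k + 1)).comp (X + 1) =
      descPochhammer R (k + 1) + (k + 1 : R[X]) * descPochhammer R k := by
  have shift : (descPochhammer R (k + 1)).comp (X + 1) = (X + 1) * descPochhammer R k := by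
    rw [descPochhammer_succ_left, mul_comp, comp_assoc, X_comp, sub_comp, X_comp, one_comp,
      add_sub_cancel_right, comp_X]
  rw [shift, descPochhammer_succ_right]
  ring

section

variable {K : Type*} [Field K]

variable (K) in
noncomputable def binomPoly (k : ℕ) : K[X] :=
  C ((k.factorial : K)⁻¹) * descPochhammer K k

theorem binomPoly_succ (k : ℕ) :
    binomPoly K (k + 1) = C ((k + 1 : K)⁻¹) * X * (binomPoly K k).comp (X - 1) := by
  simp only [binomPoly, descPochhammer_succ_left, mul_comp, C_comp, Nat.factorial_succ]
  push_cast
  rw [mul_inv, C_mul]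
  ring

theorem binomPoly_succ_comp_add_one [CharZero K] (k : ℕ) (p : K[X]) :
    (binomPoly K (k + 1)).comp (p + 1) = (binomPoly K (k + 1)).comp p + (binomPoly K k).comp p := by
  suffices (binomPoly K (k + 1)).comp (X + 1) = binomPoly K (k + 1) + binomPoly K k by
    rw [← add_comp, ← this, comp_assoc, add_comp, X_comp, one_comp]
  have hk : (k + 1 : K) ≠ 0 := by exact_mod_cast k.succ_ne_zero
  simp only [binomPoly, mul_comp, C_comp, descPochhammer_succ_comp_X_add_one, Nat.factorial_succ]
  push_cast
  have hcancel : C ((k + 1 : K)⁻¹) * (k + 1 : K[X]) = 1 := by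
    rw [← C_1, ← C_eq_natCast, ← C_add, ← C_mul, inv_mul_cancel₀ hk]
  rw [mul_inv, C_mul]
  linear_combination C ((k.factorial : K)⁻¹) * descPochhammer K k * hcancel

theorem binomPoly_succ_comp_C_mul_X [CharZero K] (k : ℕ) (d : K) :
    (binomPoly K (k + 1)).comp (C ((k + 1) * d) * X) =
      C d * X * (binomPoly K k).comp (C ((k + 1) * d) * X - 1) := by
  have hk : (k + 1 : K) ≠ 0 := by exact_mod_cast k.succ_ne_zero
  rw [binomPoly_succ, mul_comp, mul_comp, C_comp, X_comp, comp_assoc, sub_comp, X_comp, one_comp,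
    C_mul, ← mul_assoc, ← mul_assoc, ← C_mul, inv_mul_cancel₀ hk, C_1, one_mul]

theorem binomPoly_comp_mem_lifts [CharZero K] (c : ℤ) (k : ℕ)
    (hdvd : ∀ i : ℕ, 1 ≤ i → i ≤ k → (i : ℤ) ∣ c) (j : ℤ) :
    (binomPoly K k).comp (C (c : K) * X + C (j : K)) ∈ liftsRing (Int.castRingHom K) := by
  induction k generalizing j with
  | zero => simp [binomPoly, one_mem]
  | succ k ih =>
    replace ih := ih fun i hi hik => hdvd i hi (by omega)
    obtain ⟨d, hd⟩ := hdvd (k + 1) le_add_self le_rfl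
    induction j using Int.induction_on with
    | zero =>
      have hprev := ih (-1)
      have hscale := binomPoly_succ_comp_C_mul_X k (d : K)
      rw [hd] at hprev ⊢
      push_cast at hprev hscale ⊢
      rw [C_neg, C_1, ← sub_eq_add_neg] at hprev
      rw [C_0, add_zero, hscale]
      refine mul_mem (mul_mem ?_ ?_) hprev
      · exact (lifts_iff_liftsRing _ _).mp (C_mem_lifts _ d)
      · exact (lifts_iff_liftsRing _ _).mp (X_mem_lifts _)
    | succ i hi =>
      have h := binomPoly_succ_comp_add_one k (C (c : K) * X + C (i : K))
      push_cast at hi ⊢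
      rw [C_add, C_1, ← add_assoc, h]
      exact add_mem hi (by simpa using ih i)
    | pred i hi =>
      have h := binomPoly_succ_comp_add_one k (C (c : K) * X + C (-(i : K) - 1))
      rw [add_assoc, ← C_1, ← C_add, sub_add_cancel] at h
      push_cast at hi ⊢
      rw [eq_sub_of_add_eq h.symm]
      exact sub_mem hi (by simpa using ih (-i - 1))

end

theorem binomial_poly_comp_has_integer_coeffs_general (n : ℕ) (c : ℤ)
    (hmul : ∀ i : ℕ, 1 ≤ i → i ≤ n → (i : ℤ) ∣ c) (j : ℤ) :
    ∃ Q : Polynomial ℤ,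
      Q.map (Int.castRingHom ℚ) =
        Polynomial.C ((n.factorial : ℚ)⁻¹) *
          (descPochhammer ℚ n).comp (Polynomial.C (c : ℚ) * Polynomial.X +
            Polynomial.C (j : ℚ)) := by
  have h := binomPoly_comp_mem_lifts (K := ℚ) c n hmul j
  rwa [binomPoly, mul_comp, C_comp, ← lifts_iff_liftsRing, mem_lifts] at h

/-- If `c` is a positive integer that is a common multiple of `1, 2, …, n` and `j` is
any integer, then `binom(cy + j, n) = (cy+j)(cy+j-1)⋯(cy+j-n+1)/n!`, as a polynomial
in `y`, has integer coefficients. -/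
theorem binomial_poly_comp_has_integer_coeffs (n : ℕ) (c : ℤ) (hc : 0 < c)
    (hmul : ∀ i : ℕ, 1 ≤ i → i ≤ n → (i : ℤ) ∣ c) (j : ℤ) :
    ∃ Q : Polynomial ℤ,
      Q.map (Int.castRingHom ℚ) =
        Polynomial.C ((n.factorial : ℚ)⁻¹) *
          (descPochhammer ℚ n).comp (Polynomial.C (c : ℚ) * Polynomial.X +
            Polynomial.C (j : ℚ)) :=
  binomial_poly_comp_has_integer_coeffs_general n c hmul j
end

section
/- Let f ∈ Int(ℤ) be an integer-valued polynomial in one variable of degree d, and let c = lcm(1, 2, …, d). Then for every integer j the polynomial f_j(y) = f(cy + j) has integer coefficients, i.e., f_j ∈ ℤ[y], and the image of f satisfies f(ℤ) = ⋃_{j=0}^{c−1} f_j(ℤ). -/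
/-!
An integer-valued polynomial of degree `d` is an integer combination of the binomial polynomials
`binom(X, k)`, `k ≤ d`, with coefficients its iterated forward differences at `0` (Newton's
formula). If `1, …, k` all divide `c`, then `binom(cX + j, k)` has integer coefficients for every
integer `j`: for `j = 0` write `binom(cX, k + 1) = (c / (k + 1)) X binom(cX - 1, k)`, and Pascal's
rule `binom(Y + 1, k + 1) = binom(Y, k + 1) + binom(Y, k)` moves `j` up and down. The statement
about images is division with remainder by `c`.
-/

open Polynomial

lemma fwdDiff_iter_mem_of_forall_nsmul_mem {M G : Type*} [AddCommMonoid M] [AddCommGroup G]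
    {S : AddSubgroup G} {g : M → G} {h y : M} (hg : ∀ n : ℕ, g (y + n • h) ∈ S) (k : ℕ) :
    (fwdDiff h)^[k] g y ∈ S := by
  rw [fwdDiff_iter_eq_sum_shift]
  exact S.sum_mem fun i _ ↦ S.zsmul_mem (hg i) _

namespace Polynomial

noncomputable def binomPoly (k : ℕ) : ℚ[X] := C (k.factorial : ℚ)⁻¹ * descPochhammer ℚ k

@[simp]
lemma binomPoly_zero : binomPoly 0 = 1 := by simp [binomPoly]

lemma binomPoly_eval_natCast (n k : ℕ) : (binomPoly k).eval (n : ℚ) = n.choose k := by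
  rw [binomPoly, eval_C_mul, descPochhammer_eval_eq_descFactorial,
    Nat.descFactorial_eq_factorial_mul_choose]
  push_cast
  field_simp

lemma binomPoly_succ_comp_X_add_one (k : ℕ) :
    (binomPoly (k + 1)).comp (X + 1) = binomPoly (k + 1) + binomPoly k := by
  have h := congrArg (·.comp (X + 1)) (descPochhammer_succ_comp_X_sub_one (R := ℚ) k)
  simp only [comp_assoc, sub_comp, X_comp, one_comp, add_sub_cancel_right, comp_X, smul_eq_mul,
    mul_comp, add_comp, natCast_comp] at h
  have hfac : ((k + 1).factorial : ℚ)⁻¹ * (k + 1) = (k.factorial : ℚ)⁻¹ := by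
    push_cast [Nat.factorial_succ]; field_simp
  simp only [binomPoly, mul_comp, C_comp]
  rw [← hfac, C_mul]
  simp only [map_add, map_natCast, map_one]
  linear_combination -C ((k + 1).factorial : ℚ)⁻¹ * h

lemma C_mul_binomPoly_succ (k : ℕ) :
    C ((k : ℚ) + 1) * binomPoly (k + 1) = X * (binomPoly k).comp (X - 1) := by
  have hfac : ((k : ℚ) + 1) * ((k + 1).factorial : ℚ)⁻¹ = (k.factorial : ℚ)⁻¹ := by
    push_cast [Nat.factorial_succ]; field_simp
  rw [binomPoly, binomPoly, descPochhammer_succ_left, mul_comp, C_comp, ← mul_assoc, ← C_mul, hfac]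
  ring

lemma binomPoly_succ_comp_add_one (k : ℕ) (r : ℚ[X]) :
    (binomPoly (k + 1)).comp (r + 1) = (binomPoly (k + 1)).comp r + (binomPoly k).comp r := by
  simpa only [comp_assoc, add_comp, X_comp, one_comp] using
    congrArg (·.comp r) (binomPoly_succ_comp_X_add_one k)

lemma binomPoly_comp_mem_liftsRing {c k : ℕ} (hc : ∀ i ∈ Finset.Icc 1 k, i ∣ c) (j : ℤ) :
    (binomPoly k).comp (C (c : ℚ) * X + C (j : ℚ)) ∈ liftsRing (Int.castRingHom ℚ) := by
  induction k generalizing j with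
  | zero => rw [binomPoly_zero, one_comp]; exact one_mem _
  | succ k ih =>
    replace ih := ih fun i hi ↦ hc i (Finset.Icc_subset_Icc_right k.le_succ hi)
    obtain ⟨q, hq⟩ := hc (k + 1) (by simp)
    have pascal (j : ℤ) : (binomPoly (k + 1)).comp (C (c : ℚ) * X + C ((j + 1 : ℤ) : ℚ)) =
        (binomPoly (k + 1)).comp (C (c : ℚ) * X + C (j : ℚ)) +
          (binomPoly k).comp (C (c : ℚ) * X + C (j : ℚ)) := by
      rw [← binomPoly_succ_comp_add_one, Int.cast_add, Int.cast_one, C_add, C_1, add_assoc]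
    have base : (binomPoly (k + 1)).comp (C (c : ℚ) * X + C ((0 : ℤ) : ℚ)) =
        C ((q : ℤ) : ℚ) * X * (binomPoly k).comp (C (c : ℚ) * X + C ((-1 : ℤ) : ℚ)) := by
      have h := congrArg (·.comp (C (c : ℚ) * X)) (C_mul_binomPoly_succ k)
      simp only [mul_comp, C_comp, X_comp, comp_assoc, sub_comp, one_comp] at h
      apply mul_left_cancel₀ (C_ne_zero.2 (by positivity : (k : ℚ) + 1 ≠ 0))
      rw [Int.cast_zero, C_0, add_zero, h, hq]
      push_cast
      rw [C_mul, C_neg, C_1, ← sub_eq_add_neg]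
      ring
    induction j using Int.induction_on with
    | zero =>
      rw [base]
      exact mul_mem (mul_mem ((lifts_iff_liftsRing _ _).1 (C_mem_lifts _ (q : ℤ)))
        ((lifts_iff_liftsRing _ _).1 (X_mem_lifts _))) (ih (-1))
    | succ n ihn => rw [pascal]; exact add_mem ihn (ih n)
    | pred n ihn =>
      have h := pascal (-n - 1)
      rw [sub_add_cancel] at h
      rw [eq_sub_of_add_eq h.symm]
      exact sub_mem ihn (ih _)

lemma eq_sum_fwdDiff_iter_mul_binomPoly (f : ℚ[X]) :
    f = ∑ k ∈ Finset.range (f.natDegree + 1), C ((fwdDiff 1)^[k] f.eval 0) * binomPoly k := by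
  refine eq_of_infinite_eval_eq _ _
    (Set.infinite_of_injective_forall_mem Nat.cast_injective fun n : ℕ ↦ ?_)
  have newton : f.eval (n : ℚ) =
      ∑ k ∈ Finset.range (n + 1), n.choose k • (fwdDiff 1)^[k] f.eval 0 := by
    simpa using shift_eq_sum_fwdDiff_iter 1 f.eval n 0
  have range_sub {m : ℕ} (hm : m ≤ n + f.natDegree + 1) :=
    Finset.range_subset_range.2 hm
  rw [Set.mem_ofPred_eq, eval_finsetSum, newton,
    Finset.sum_subset (range_sub (by omega)) fun k _ hk ↦ by
      rw [Nat.choose_eq_zero_of_lt (by simpa using hk), zero_smul],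
    Finset.sum_subset (range_sub (m := f.natDegree + 1) (by omega)) fun k _ hk ↦ by
      rw [fwdDiff_iter_eq_zero_of_degree_lt (by simpa using hk), Pi.zero_apply, C_0, zero_mul,
        eval_zero]]
  refine Finset.sum_congr rfl fun k _ ↦ ?_
  rw [eval_mul, eval_C, binomPoly_eval_natCast, nsmul_eq_mul, mul_comm]

lemma comp_C_mul_X_add_C_mem_liftsRing {f : ℚ[X]} (hf : ∀ n : ℕ, ∃ z : ℤ, f.eval (n : ℚ) = z)
    {c : ℕ} (hc : ∀ i ∈ Finset.Icc 1 f.natDegree, i ∣ c) (j : ℤ) :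
    f.comp (C (c : ℚ) * X + C (j : ℚ)) ∈ liftsRing (Int.castRingHom ℚ) := by
  rw [eq_sum_fwdDiff_iter_mul_binomPoly f, sum_comp]
  refine Subring.sum_mem _ fun k hk ↦ ?_
  have hk : k ≤ f.natDegree := Nat.lt_succ_iff.1 (Finset.mem_range.1 hk)
  obtain ⟨z, hz⟩ : (fwdDiff 1)^[k] f.eval 0 ∈ (Int.castAddHom ℚ).range :=
    fwdDiff_iter_mem_of_forall_nsmul_mem (fun n ↦ by
      obtain ⟨z, hz⟩ := hf n
      exact ⟨z, by simp [hz]⟩) k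
  rw [mul_comp, C_comp, ← hz]
  exact mul_mem ((lifts_iff_liftsRing _ _).1 (C_mem_lifts _ z))
    (binomPoly_comp_mem_liftsRing (fun i hi ↦ hc i (Finset.Icc_subset_Icc_right hk hi)) j)

end Polynomial

lemma Set.range_eq_iUnion_range_mul_add {α : Type*} (g : ℤ → α) {c : ℕ} (hc : 0 < c) :
    Set.range g = ⋃ j ∈ Finset.range c, Set.range fun y : ℤ ↦ g (c * y + j) := by
  refine subset_antisymm (fun _ ⟨a, ha⟩ ↦ ?_)
    (Set.iUnion₂_subset fun j _ ↦ Set.range_comp_subset_range _ g)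
  have hmod : 0 ≤ a % c := Int.emod_nonneg a (by omega)
  refine Set.mem_iUnion₂.2 ⟨(a % c).toNat, ?_, a / c, ?_⟩
  · have := Int.emod_lt_of_pos a (by omega : (0 : ℤ) < c)
    rw [Finset.mem_range]
    omega
  · simp only [Int.toNat_of_nonneg hmod, Int.mul_ediv_add_emod, ha]

/-- Lemma 3, one-variable case: if `f ∈ Int(ℤ)` has degree `d` and
`c = lcm(1,…,d)`, then each `f_j(y) = f(cy + j)` has integer coefficients, and the
image of `f` on `ℤ` is the union of the images of `f_0, …, f_{c-1}` on `ℤ`. -/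
theorem intValued_poly_image_eq_union_int_poly_images (f : Polynomial ℚ)
    (hf : ∀ a : ℤ, ∃ z : ℤ, f.eval (a : ℚ) = (z : ℚ)) (d c : ℕ)
    (hd : d = f.natDegree) (hc : c = (Finset.Icc 1 d).lcm id) :
    (∀ j : ℤ, ∃ F : Polynomial ℤ,
      F.map (Int.castRingHom ℚ) =
        f.comp (Polynomial.C (c : ℚ) * Polynomial.X + Polynomial.C (j : ℚ))) ∧
    {z : ℤ | ∃ a : ℤ, f.eval (a : ℚ) = (z : ℚ)} =
      ⋃ j ∈ Finset.range c,
        {z : ℤ | ∃ y : ℤ, f.eval (((c : ℤ) * y + (j : ℤ) : ℤ) : ℚ) = (z : ℚ)} := by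
  have hc_dvd : ∀ i ∈ Finset.Icc 1 d, i ∣ c := fun i hi ↦ hc ▸ Finset.dvd_lcm hi
  have hc_pos : 0 < c := by
    rw [hc, Nat.pos_iff_ne_zero, Ne, Finset.lcm_eq_zero_iff]
    simp
  refine ⟨fun j ↦ ?_, ?_⟩
  · subst hd
    exact comp_C_mul_X_add_C_mem_liftsRing (fun n ↦ mod_cast hf n) hc_dvd j
  · change Int.cast ⁻¹' Set.range (fun a : ℤ ↦ f.eval (a : ℚ)) =
      ⋃ j ∈ Finset.range c, Int.cast ⁻¹' Set.range fun y : ℤ ↦ f.eval ((c * y + j : ℤ) : ℚ)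
    rw [← Set.preimage_iUnion₂,
      Set.range_eq_iUnion_range_mul_add (fun a : ℤ ↦ f.eval (a : ℚ)) hc_pos]
end

section
/- Let f ∈ Int(ℤ^n) be an integer-valued polynomial in n variables whose degree in the variable x_i is d_i, and for each i let c_i be a common multiple of 1, 2, …, d_i. Then for each choice of integers j₁,…,j_n the polynomial f_{j₁,…,j_n}(y₁,…,y_n) = f(c₁y₁ + j₁, …, c_ny_n + j_n) has integer coefficients, i.e., lies in ℤ[y₁,…,y_n], and the image of f satisfies f(ℤ^n) = ⋃ f_{j₁,…,j_n}(ℤ^n), the union taken over all (j₁,…,j_n) with 0 ≤ j_i < c_i for each i. -/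
/-!
For one variable, Newton's formula gives `f (x + j) = ∑_{k ≤ d} Δᵏf(j) · (x choose k)`, and the
differences `Δᵏf(j)` are integers when `f` is integer-valued; hence
`f (c y + j) = ∑_{k ≤ d} Δᵏf(j) · (c y choose k)`. If `1, …, k` all divide `c`, then
`c y choose k` has integer coefficients: `(k + 1) · (c y choose (k + 1)) = c y · (c y - 1 choose k)`
with `c / (k + 1)` an integer, and Pascal's rule passes between the shifts `c y + j` and
`c y + j + 1`, so induction on `k` covers all shifts at once.

For `n + 1` variables, view `f` as a polynomial in `x₀` over `ℚ[x₁, …, xₙ]` and substitute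
`c₀ x₀ + j₀` first. Each coefficient of the result is integer-valued (specialise `x₁, …, xₙ` to
integers and use the one-variable case) and its degree in `xᵢ` is still at most that of `f`, so
the induction hypothesis in `n` gives the remaining substitutions. The description of the image is
division with remainder.
-/

open Polynomial
open scoped fwdDiff

theorem Ring.choose_add_intCast_succ_mem {R : Type*} [CommRing R] [BinomialRing R]
    (S : Subring R) {r : R} {k : ℕ} (hk : ∀ j : ℤ, Ring.choose (r + j) k ∈ S)
    (h0 : Ring.choose r (k + 1) ∈ S) (j : ℤ) : Ring.choose (r + j) (k + 1) ∈ S := by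
  induction j using Int.induction_on with
  | zero => simpa using h0
  | succ i ih =>
    rw [Int.cast_add, Int.cast_one, ← add_assoc, Ring.choose_succ_succ]
    exact S.add_mem (hk i) ih
  | pred i ih =>
    have pascal := Ring.choose_succ_succ (r + ((-i - 1 : ℤ) : R)) k
    rw [show r + ((-i - 1 : ℤ) : R) + 1 = r + ((-i : ℤ) : R) by push_cast; ring] at pascal
    rw [eq_sub_of_add_eq' pascal.symm]
    exact S.sub_mem ih (hk _)

theorem Ring.succ_mul_choose_succ {R : Type*} [CommRing R] [BinomialRing R] (r : R) (k : ℕ) :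
    ((k + 1 : ℕ) : R) * Ring.choose r (k + 1) = r * Ring.choose (r - 1) k := by
  simpa [nsmul_eq_mul] using Ring.choose_smul_choose r (n := k + 1) (k := 1) (by omega)

theorem exists_fwdDiff_iter_eq_intCast {R : Type*} [Ring R] {g : R → R}
    (hg : ∀ x : ℤ, ∃ z : ℤ, g x = z) (k : ℕ) (x : ℤ) : ∃ z : ℤ, (Δ_[1] ^[k] g) x = z := by
  induction k generalizing g with
  | zero => exact hg x
  | succ k ih =>
    refine Function.iterate_succ_apply .. ▸ ih (fun x => ?_)
    obtain ⟨a, ha⟩ := hg (x + 1)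
    obtain ⟨b, hb⟩ := hg x
    exact ⟨a - b, by simp only [fwdDiff]; push_cast at ha ⊢; rw [ha, hb]⟩

namespace Polynomial

theorem choose_C_mul_X_add_intCast_mem_liftsRing {c : ℤ} {k : ℕ}
    (hc : ∀ t : ℕ, 1 ≤ t → t ≤ k → (t : ℤ) ∣ c) (j : ℤ) :
    Ring.choose (C (c : ℚ) * X + (j : ℚ[X])) k ∈ liftsRing (Int.castRingHom ℚ) := by
  induction k generalizing j with
  | zero => simp
  | succ k ih =>
    have hk := ih (fun t h1 h2 => hc t h1 (by omega))
    refine Ring.choose_add_intCast_succ_mem _ hk ?_ j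
    obtain ⟨e, he⟩ := hc (k + 1) (by omega) le_rfl
    have hrec : Ring.choose (C (c : ℚ) * X) (k + 1) =
        C (e : ℚ) * X * Ring.choose (C (c : ℚ) * X + ((-1 : ℤ) : ℚ[X])) k := by
      refine mul_left_cancel₀ (Nat.cast_ne_zero.2 k.succ_ne_zero) ?_
      rw [Ring.succ_mul_choose_succ, Int.cast_neg, Int.cast_one, ← sub_eq_add_neg, he,
        Int.cast_mul, Int.cast_natCast, C_mul, C_eq_natCast]
      ring
    rw [hrec]
    exact mul_mem (mul_mem ⟨C e, by simp⟩ ⟨X, by simp⟩) (hk (-1))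

theorem eq_of_eval_natCast_eq {R : Type*} [CommRing R] [IsDomain R] [CharZero R]
    {p q : R[X]} (h : ∀ m : ℕ, p.eval (m : R) = q.eval (m : R)) : p = q :=
  eq_of_infinite_eval_eq p q (Set.infinite_of_injective_forall_mem Nat.cast_injective h)

theorem eval_natCast_choose_X (m k : ℕ) :
    (Ring.choose (X : ℚ[X]) k).eval (m : ℚ) = m.choose k := by
  rw [← coe_evalRingHom, Ring.map_choose, coe_evalRingHom, eval_X, Ring.choose_natCast]

theorem comp_X_add_C_eq_sum_fwdDiff_iter (p : ℚ[X]) (y : ℚ) :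
    p.comp (X + C y) =
      ∑ k ∈ Finset.range (p.natDegree + 1), (Δ_[1] ^[k] p.eval y) • Ring.choose (X : ℚ[X]) k := by
  refine eq_of_eval_natCast_eq fun m => ?_
  -- Gregory–Newton sums over `k ≤ m`; both sums extend by zero terms to `k ≤ m + natDegree`.
  have hsub : ∀ l ≤ m + p.natDegree,
      Finset.range (l + 1) ⊆ Finset.range (m + p.natDegree + 1) :=
    fun l hl => Finset.range_subset_range.2 (by omega)
  simp only [eval_comp, eval_add, eval_X, eval_C, eval_finsetSum, eval_smul, smul_eq_mul,
    eval_natCast_choose_X]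
  rw [add_comm, ← nsmul_one, shift_eq_sum_fwdDiff_iter 1 p.eval,
    Finset.sum_subset (hsub m (by omega)), Finset.sum_subset (hsub p.natDegree (by omega))]
  · exact Finset.sum_congr rfl fun k _ => by rw [nsmul_eq_mul, mul_comm]
  · intro k _ hk
    rw [fwdDiff_iter_eq_zero_of_degree_lt (by simp at hk; omega)]
    simp
  · intro k _ hk
    rw [Nat.choose_eq_zero_of_lt (by simp at hk; omega)]
    simp

theorem comp_C_mul_X_add_C_mem_liftsRing_s11 {p : ℚ[X]}
    (hp : ∀ x : ℤ, ∃ z : ℤ, p.eval (x : ℚ) = z) {c : ℤ}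
    (hc : ∀ t : ℕ, 1 ≤ t → t ≤ p.natDegree → (t : ℤ) ∣ c) (j : ℤ) :
    p.comp (C (c : ℚ) * X + C (j : ℚ)) ∈ liftsRing (Int.castRingHom ℚ) := by
  have hsplit : p.comp (C (c : ℚ) * X + C (j : ℚ)) =
      (p.comp (X + C (j : ℚ))).comp (C (c : ℚ) * X) := by
    rw [comp_assoc, add_comp, X_comp, C_comp]
  rw [hsplit, comp_X_add_C_eq_sum_fwdDiff_iter, sum_comp]
  refine Subring.sum_mem _ fun k hk => ?_
  obtain ⟨z, hz⟩ := exists_fwdDiff_iter_eq_intCast (g := p.eval) hp k j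
  rw [smul_comp, ← coe_compRingHom_apply, Ring.map_choose, coe_compRingHom_apply, X_comp, hz,
    Int.cast_smul_eq_zsmul]
  refine Subring.zsmul_mem _ ?_ z
  simpa using choose_C_mul_X_add_intCast_mem_liftsRing
    (fun t h1 h2 => hc t h1 (h2.trans (Nat.lt_succ_iff.1 (Finset.mem_range.1 hk)))) 0

end Polynomial

namespace MvPolynomial

theorem degreeOf_coeff_comp_map_C_le {σ R : Type*} [CommSemiring R] {P : (MvPolynomial σ R)[X]}
    {i : σ} {d : ℕ} (h : ∀ m, (P.coeff m).degreeOf i ≤ d) (q : R[X]) (k : ℕ) :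
    ((P.comp (q.map C)).coeff k).degreeOf i ≤ d := by
  rw [comp_eq_sum_left, Polynomial.sum_def, Polynomial.finsetSum_coeff]
  refine (degreeOf_sum_le _ _ _).trans (Finset.sup_le fun m _ => ?_)
  rw [Polynomial.coeff_C_mul, ← Polynomial.map_pow, Polynomial.coeff_map]
  exact (degreeOf_mul_C_le _ _ _).trans (h m)

theorem mem_range_map_of_coeff_finSuccEquiv {R S : Type*} [CommRing R] [CommRing S]
    (f : R →+* S) {n : ℕ} {F : MvPolynomial (Fin (n + 1)) S}
    (h : ∀ k, (finSuccEquiv S n F).coeff k ∈ (map f).range) : F ∈ (map f).range := by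
  rw [← SetLike.mem_coe, RingHom.coe_range, mem_range_map_iff_coeffs_subset]
  intro x hx
  obtain ⟨m, -, rfl⟩ := mem_coeffs_iff.1 hx
  obtain ⟨G, hG⟩ := h (m 0)
  rw [← Finsupp.cons_tail m, ← finSuccEquiv_coeff_coeff, ← hG, coeff_map]
  exact Set.mem_range_self _

theorem finSuccEquiv_bind₁_C_mul_X_add_C {R : Type*} [CommRing R] {n : ℕ}
    (c j : Fin (n + 1) → R) (f : MvPolynomial (Fin (n + 1)) R) :
    finSuccEquiv R n (bind₁ (fun i => C (c i) * X i + C (j i)) f) =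
      ((finSuccEquiv R n f).comp
          (Polynomial.C (C (c 0)) * Polynomial.X + Polynomial.C (C (j 0)))).map
        (bind₁ (fun i : Fin n => C (c i.succ) * X i + C (j i.succ))).toRingHom := by
  let lhs := (finSuccEquiv R n).toAlgHom.comp (bind₁ (fun i => C (c i) * X i + C (j i)))
  let lin : (MvPolynomial (Fin n) R)[X] :=
    Polynomial.C (C (c 0)) * Polynomial.X + Polynomial.C (C (j 0))
  let rhs := (Polynomial.mapAlgHom
      (bind₁ (fun i : Fin n => C (c i.succ) * X i + C (j i.succ)))).comp
    (((Polynomial.aeval lin).restrictScalars R).comp (finSuccEquiv R n).toAlgHom)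
  have hext : lhs = rhs := by
    refine algHom_ext fun i => Fin.cases ?_ (fun i => ?_) i <;>
      simp [lhs, rhs, lin, finSuccEquiv_apply]
  exact DFunLike.congr_fun hext f

theorem exists_eval_coeff_finSuccEquiv_comp_eq_intCast {n : ℕ}
    {f : MvPolynomial (Fin (n + 1)) ℚ}
    (hf : ∀ a : Fin (n + 1) → ℤ, ∃ z : ℤ, eval (fun i => (a i : ℚ)) f = z) {c : ℤ}
    (hc : ∀ t : ℕ, 1 ≤ t → t ≤ f.degreeOf 0 → (t : ℤ) ∣ c) (j : ℤ) (k : ℕ) (a : Fin n → ℤ) :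
    ∃ z : ℤ, eval (fun i => (a i : ℚ)) (((finSuccEquiv ℚ n f).comp
      (Polynomial.C (C (c : ℚ)) * Polynomial.X + Polynomial.C (C (j : ℚ)))).coeff k) = z := by
  set g := (finSuccEquiv ℚ n f).map (eval fun i => (a i : ℚ))
  have hg : ∀ x : ℤ, ∃ z : ℤ, g.eval (x : ℚ) = z := fun x => by
    obtain ⟨z, hz⟩ := hf (Fin.cons x a)
    refine ⟨z, ?_⟩
    rw [← hz, ← eval_eq_eval_mv_eval']
    exact congrArg (eval · f) (Fin.comp_cons _ _ _).symm
  have hdeg : g.natDegree ≤ f.degreeOf 0 :=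
    Polynomial.natDegree_map_le.trans (natDegree_finSuccEquiv f).le
  obtain ⟨P, hP⟩ := Polynomial.comp_C_mul_X_add_C_mem_liftsRing_s11 hg
    (fun t h1 h2 => hc t h1 (h2.trans hdeg)) j
  refine ⟨P.coeff k, ?_⟩
  rw [← Polynomial.coeff_map, Polynomial.map_comp]
  simp only [Polynomial.map_add, Polynomial.map_mul, Polynomial.map_C, Polynomial.map_X, eval_C]
  rw [← hP, coe_mapRingHom, Polynomial.coeff_map, eq_intCast]

theorem bind₁_C_mul_X_add_C_mem_range_map {n : ℕ} {f : MvPolynomial (Fin n) ℚ}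
    (hf : ∀ a : Fin n → ℤ, ∃ z : ℤ, eval (fun i => (a i : ℚ)) f = z) {c : Fin n → ℤ}
    (hc : ∀ i, ∀ t : ℕ, 1 ≤ t → t ≤ f.degreeOf i → (t : ℤ) ∣ c i) (j : Fin n → ℤ) :
    bind₁ (fun i => C (c i : ℚ) * X i + C (j i : ℚ)) f ∈ (map (Int.castRingHom ℚ)).range := by
  induction n with
  | zero =>
    obtain ⟨z, hz⟩ := hf finZeroElim
    rw [eq_C_of_isEmpty f, eval_C] at hz
    rw [eq_C_of_isEmpty f, bind₁_C_right, hz]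
    exact ⟨C z, map_C _ _⟩
  | succ n ih =>
    refine mem_range_map_of_coeff_finSuccEquiv _ fun k => ?_
    rw [finSuccEquiv_bind₁_C_mul_X_add_C, Polynomial.coeff_map]
    refine ih (exists_eval_coeff_finSuccEquiv_comp_eq_intCast hf (hc 0) (j 0) k)
      (fun i t h1 h2 => hc i.succ t h1 (h2.trans ?_)) (fun i => j i.succ)
    have hlin : (Polynomial.C (c 0 : ℚ) * Polynomial.X + Polynomial.C (j 0 : ℚ)).map
        (C : ℚ →+* MvPolynomial (Fin n) ℚ) =
        Polynomial.C (C (c 0 : ℚ)) * Polynomial.X + Polynomial.C (C (j 0 : ℚ)) := by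
      simp only [Polynomial.map_add, Polynomial.map_mul, Polynomial.map_C, Polynomial.map_X]
    have hdeg := degreeOf_coeff_comp_map_C_le (degreeOf_coeff_finSuccEquiv f i)
      (Polynomial.C (c 0 : ℚ) * Polynomial.X + Polynomial.C (j 0 : ℚ)) k
    rwa [hlin] at hdeg

end MvPolynomial

theorem exists_iff_exists_mul_add_of_pos {ι : Type*} {c : ι → ℤ} (hc : ∀ i, 0 < c i)
    (P : (ι → ℤ) → Prop) :
    (∃ a, P a) ↔
      ∃ j : ι → ℤ, (∀ i, 0 ≤ j i ∧ j i < c i) ∧ ∃ y : ι → ℤ, P (fun i => c i * y i + j i) := by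
  refine ⟨fun ⟨a, ha⟩ => ?_, fun ⟨_, _, _, hy⟩ => ⟨_, hy⟩⟩
  refine ⟨fun i => a i % c i, fun i => ⟨Int.emod_nonneg _ (hc i).ne', Int.emod_lt_of_pos _ (hc i)⟩,
    fun i => a i / c i, ?_⟩
  simpa only [Int.mul_ediv_add_emod] using ha

/-- Lemma 3, several variables: if `f ∈ Int(ℤ^n)` has degree `d_i` in `x_i` and each
`c_i` is a (positive) common multiple of `1, 2, …, d_i`, then for all integers
`j₁, …, j_n` the polynomial `f(c₁y₁ + j₁, …, c_ny_n + j_n)` has integer coefficients,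
and the image of `f` on `ℤ^n` is the union, over all `j` with `0 ≤ j_i < c_i`, of the
images of these polynomials. -/
theorem intValued_mvpoly_image_eq_union_int_poly_images (n : ℕ)
    (f : MvPolynomial (Fin n) ℚ)
    (hf : ∀ a : Fin n → ℤ, ∃ z : ℤ, MvPolynomial.eval (fun i => (a i : ℚ)) f = (z : ℚ))
    (c : Fin n → ℕ) (hc : ∀ i, 0 < c i)
    (hmul : ∀ i, ∀ t : ℕ, 1 ≤ t → t ≤ f.degreeOf i → t ∣ c i) :
    (∀ j : Fin n → ℤ, ∃ F : MvPolynomial (Fin n) ℤ,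
      MvPolynomial.map (Int.castRingHom ℚ) F =
        MvPolynomial.bind₁
          (fun i => MvPolynomial.C ((c i : ℚ)) * MvPolynomial.X i +
            MvPolynomial.C ((j i : ℚ))) f) ∧
    {z : ℤ | ∃ a : Fin n → ℤ, MvPolynomial.eval (fun i => (a i : ℚ)) f = (z : ℚ)} =
      ⋃ j ∈ {j : Fin n → ℤ | ∀ i, 0 ≤ j i ∧ j i < (c i : ℤ)},
        {z : ℤ | ∃ y : Fin n → ℤ,
          MvPolynomial.eval (fun i => (((c i : ℤ) * y i + j i : ℤ) : ℚ)) f = (z : ℚ)} := by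
  refine ⟨fun j => ?_, ?_⟩
  · simpa using MvPolynomial.bind₁_C_mul_X_add_C_mem_range_map hf (c := fun i => (c i : ℤ))
      (fun i t h1 h2 => Int.natCast_dvd_natCast.2 (hmul i t h1 h2)) j
  · ext z
    simp only [Set.mem_ofPred_eq, Set.mem_iUnion, exists_prop]
    exact exists_iff_exists_mul_add_of_pos (fun i => Int.natCast_pos.2 (hc i)) _
end

section
/- Let k ≥ 1 and let S ⊆ ℤ^k be a set whose complement ℤ^k ∖ S is finite. Then there exist n and a k-tuple f = (f₁,…,f_k) ∈ (ℤ[x₁,…,x_n])^k of polynomials with integer coefficients such that S = f(ℤ^n). -/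
/-!
For a finite `F ⊆ ℤ^k` put `P(v) = ∏_{c ∈ F} |v - c|²`, `M(v) = 2 + ∑_{c ∈ F} |v - c|²` and,
for `w ∈ ℤ⁴`, `D = (P(v) - 1 - |w|²) M(v)`. The polynomial map `(v, w, t) ↦ v + D (1 + D t) e₀`
has image exactly `ℤ^k ∖ F`. If `v ∉ F` then `P(v) ≥ 1`, and Lagrange's four-square theorem
gives `w` with `D = 0`, so `v` is attained. Conversely, if `D = 0` then `P(v) = 1 + |w|² > 0`,
so the value `v` is not in `F`. If `D ≠ 0` then `|D| ≥ M(v)`, which exceeds `2` and every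
`|c₀ - v₀|` with `c ∈ F`; hitting `c₀` would force `D ∣ c₀ - v₀`, hence `c₀ = v₀`, hence
`D (1 + D t) = 0`, i.e. `D ∣ 1`.
-/

open MvPolynomial Finset

def polyImage {R σ ι : Type*} [CommSemiring R] (f : ι → MvPolynomial σ R) : Set (ι → R) :=
  Set.range fun a i => eval a (f i)

lemma polyImage_eq_setOf {R σ ι : Type*} [CommSemiring R] (f : ι → MvPolynomial σ R) :
    polyImage f = {v | ∃ a : σ → R, ∀ i, eval a (f i) = v i} := by
  simp only [polyImage, Set.range, funext_iff]

lemma polyImage_rename {R σ τ ι : Type*} [CommSemiring R] (f : ι → MvPolynomial σ R)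
    (e : σ ≃ τ) : polyImage (fun i => rename e (f i)) = polyImage f := by
  have he : Function.Surjective fun a : τ → R => a ∘ e :=
    fun b => ⟨b ∘ e.symm, by simp [Function.comp_assoc]⟩
  simp only [polyImage, eval_rename]
  exact he.range_comp fun a i => eval a (f i)

lemma Int.add_mul_one_add_mul_ne {x y d t : ℤ} (hd : 2 ≤ |d|) (hxy : |y - x| < |d|) :
    x + d * (1 + d * t) ≠ y := by
  intro h
  have hyx : y - x = 0 :=
    Int.eq_zero_of_abs_lt_dvd ((abs_dvd d _).mpr ⟨1 + d * t, by linarith⟩) hxy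
  have hd0 : d ≠ 0 := by rintro rfl; simp at hd
  have hinv : d * -t = 1 := by
    have : 1 + d * t = 0 := (mul_eq_zero.mp (by linarith : d * (1 + d * t) = 0)).resolve_left hd0
    linarith
  rcases Int.eq_one_or_neg_one_of_mul_eq_one hinv with rfl | rfl <;> norm_num at hd

lemma exists_sum_four_sq_eq {n : ℤ} (hn : 0 ≤ n) : ∃ w : Fin 4 → ℤ, ∑ j, w j ^ 2 = n := by
  obtain ⟨a, b, c, d, h⟩ := Nat.sum_four_squares n.toNat
  refine ⟨![a, b, c, d], ?_⟩
  simp only [Fin.sum_univ_four, Matrix.cons_val]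
  rw [← Int.toNat_of_nonneg hn]
  exact_mod_cast h

section CofiniteParam

-- Over an arbitrary commutative ring, so that `cofiniteParamPoly` is the same formula applied to
-- the variables of `MvPolynomial` and evaluation commutes with it (`comp_cofiniteParam`).
variable {ι R S : Type*} [Fintype ι] [CommRing R] [CommRing S]

def sqDist (v : ι → R) (c : ι → ℤ) : R := ∑ i, (v i - c i) ^ 2

def defect (F : Finset (ι → ℤ)) (v : ι → R) (w : Fin 4 → R) : R :=
  (∏ c ∈ F, sqDist v c - 1 - ∑ j, w j ^ 2) * (2 + ∑ c ∈ F, sqDist v c)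

def cofiniteParam [DecidableEq ι] (F : Finset (ι → ℤ)) (i₀ : ι) (v : ι → R) (w : Fin 4 → R)
    (t : R) : ι → R :=
  Function.update v i₀ (v i₀ + defect F v w * (1 + defect F v w * t))

lemma map_sqDist (φ : R →+* S) (v : ι → R) (c : ι → ℤ) :
    φ (sqDist v c) = sqDist (φ ∘ v) c := by
  simp [sqDist]

lemma map_defect (φ : R →+* S) (F : Finset (ι → ℤ)) (v : ι → R) (w : Fin 4 → R) :
    φ (defect F v w) = defect F (φ ∘ v) (φ ∘ w) := by
  simp [defect, map_sqDist, map_ofNat]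

lemma comp_cofiniteParam [DecidableEq ι] (φ : R →+* S) (F : Finset (ι → ℤ)) (i₀ : ι)
    (v : ι → R) (w : Fin 4 → R) (t : R) :
    φ ∘ cofiniteParam F i₀ v w t = cofiniteParam F i₀ (φ ∘ v) (φ ∘ w) (φ t) := by
  simp [cofiniteParam, Function.comp_update, map_defect]

end CofiniteParam

section IntegerPoints

variable {ι : Type*} [Fintype ι] {F : Finset (ι → ℤ)} {v : ι → ℤ} {w : Fin 4 → ℤ}

lemma sqDist_nonneg (v c : ι → ℤ) : 0 ≤ sqDist v c :=
  sum_nonneg fun _ _ => sq_nonneg _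

lemma sq_sub_le_sqDist (v c : ι → ℤ) (i : ι) : (v i - c i) ^ 2 ≤ sqDist v c := by
  simp only [sqDist, Int.cast_id]
  exact single_le_sum (f := fun j => (v j - c j) ^ 2) (fun _ _ => sq_nonneg _) (mem_univ i)

lemma sqDist_pos {v c : ι → ℤ} (h : v ≠ c) : 0 < sqDist v c := by
  obtain ⟨i, hi⟩ := Function.ne_iff.mp h
  exact (pow_two_pos_of_ne_zero (sub_ne_zero.mpr hi)).trans_le (sq_sub_le_sqDist v c i)

lemma defect_ne_zero_of_mem (hv : v ∈ F) : defect F v w ≠ 0 := by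
  have hprod : ∏ c ∈ F, sqDist v c = 0 := prod_eq_zero hv (by simp [sqDist])
  have hM : 0 < 2 + ∑ c ∈ F, sqDist v c := by
    linarith [sum_nonneg fun c (_ : c ∈ F) => sqDist_nonneg v c]
  have hw : 0 ≤ ∑ j, w j ^ 2 := sum_nonneg fun _ _ => sq_nonneg _
  rw [defect, hprod]
  nlinarith

lemma two_add_sum_sqDist_le_abs_defect (h : defect F v w ≠ 0) :
    2 + ∑ c ∈ F, sqDist v c ≤ |defect F v w| := by
  have hM : 0 ≤ 2 + ∑ c ∈ F, sqDist v c := by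
    linarith [sum_nonneg fun c (_ : c ∈ F) => sqDist_nonneg v c]
  rw [defect, abs_mul, abs_of_nonneg hM]
  exact le_mul_of_one_le_left hM (Int.one_le_abs (left_ne_zero_of_mul h))

variable [DecidableEq ι] (i₀ : ι)

lemma cofiniteParam_notMem (t : ℤ) : cofiniteParam F i₀ v w t ∉ F := by
  intro hF
  by_cases hD : defect F v w = 0
  · simp only [cofiniteParam, hD, zero_mul, add_zero, Function.update_eq_self] at hF
    exact defect_ne_zero_of_mem hF hD
  set c := cofiniteParam F i₀ v w t
  have hc₀ : v i₀ + defect F v w * (1 + defect F v w * t) = c i₀ := by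
    simp [c, cofiniteParam]
  have hM := two_add_sum_sqDist_le_abs_defect hD
  have hc : (v i₀ - c i₀) ^ 2 ≤ ∑ c' ∈ F, sqDist v c' :=
    (sq_sub_le_sqDist v c i₀).trans <|
      single_le_sum (f := sqDist v) (fun c' _ => sqDist_nonneg v c') hF
  refine Int.add_mul_one_add_mul_ne (by linarith [sq_nonneg (v i₀ - c i₀)]) ?_ hc₀
  rw [abs_sub_comm]
  linarith [Int.natAbs_le_self_sq (v i₀ - c i₀), Int.natCast_natAbs (v i₀ - c i₀)]

lemma exists_cofiniteParam_eq (hv : v ∉ F) : ∃ w, cofiniteParam F i₀ v w 0 = v := by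
  have hP : 1 ≤ ∏ c ∈ F, sqDist v c :=
    prod_pos fun c hc => sqDist_pos fun h : v = c => hv (h ▸ hc)
  obtain ⟨w, hw⟩ := exists_sum_four_sq_eq (sub_nonneg.mpr hP)
  refine ⟨w, ?_⟩
  simp [cofiniteParam, defect, hw]

end IntegerPoints

section Polynomial

variable {ι : Type*} [Fintype ι] [DecidableEq ι]

noncomputable def cofiniteParamPoly (F : Finset (ι → ℤ)) (i₀ : ι) :
    ι → MvPolynomial (ι ⊕ Option (Fin 4)) ℤ :=
  cofiniteParam F i₀ (fun i => X (.inl i)) (fun j => X (.inr (some j))) (X (.inr none))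

lemma eval_cofiniteParamPoly (F : Finset (ι → ℤ)) (i₀ : ι) (a : ι ⊕ Option (Fin 4) → ℤ) :
    (fun i => eval a (cofiniteParamPoly F i₀ i)) =
      cofiniteParam F i₀ (fun i => a (.inl i)) (fun j => a (.inr (some j))) (a (.inr none)) :=
  (comp_cofiniteParam (eval a) ..).trans (by simp only [Function.comp_def, eval_X])

lemma polyImage_cofiniteParamPoly (F : Finset (ι → ℤ)) (i₀ : ι) :
    polyImage (cofiniteParamPoly F i₀) = (↑F)ᶜ := by
  ext v
  simp only [polyImage, Set.mem_range, eval_cofiniteParamPoly, Set.mem_compl_iff, mem_coe]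
  constructor
  · rintro ⟨a, rfl⟩
    exact cofiniteParam_notMem i₀ _
  · intro hv
    obtain ⟨w, hw⟩ := exists_cofiniteParam_eq i₀ hv
    exact ⟨Sum.elim v fun o => o.elim 0 w, hw⟩

end Polynomial

/-- Every co-finite subset `S` of `ℤ^k` (`k ≥ 1`) is the image of some `ℤ^n` under a
`k`-tuple of polynomials with integer coefficients. -/
theorem cofinite_set_int_poly_param (k : ℕ) (hk : 1 ≤ k) (S : Set (Fin k → ℤ))
    (hco : Sᶜ.Finite) :
    ∃ (n : ℕ) (f : Fin k → MvPolynomial (Fin n) ℤ),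
      S = {v : Fin k → ℤ | ∃ a : Fin n → ℤ, ∀ i, MvPolynomial.eval a (f i) = v i} := by
  let e := Fintype.equivFin (Fin k ⊕ Option (Fin 4))
  refine ⟨_, fun i => rename e (cofiniteParamPoly hco.toFinset ⟨0, hk⟩ i), ?_⟩
  rw [← polyImage_eq_setOf, polyImage_rename, polyImage_cofiniteParamPoly, hco.coe_toFinset,
    compl_compl]
end

section
/- Let n ≥ 0 be an integer and define f ∈ ℤ[x₁,x₂,x₃,x₄,x₅] by f = −x₅²(x₁² + x₂² + x₃² + x₄² + 1) + (1 − x₅²)(x₁² + x₂² + x₃² + x₄² + n + 1). Then the image of f on ℤ⁵ is exactly ℤ ∖ {0, 1, …, n}, i.e., the set of integers z with z < 0 or z > n. -/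
/-!
Write `s = x₁² + x₂² + x₃² + x₄²` and `t = x₅`, so that
`f = s + n + 1 - t² (2s + n + 2)`. For `t = 0` this is `s + n + 1 > n`, while for `t ≠ 0`
it is at most `-s - 1 < 0`. Conversely, `t = 0` gives every `s + n + 1` and `t = 1` gives every
`-(s + 1)`, and by Lagrange's four-square theorem `s` ranges over all non-negative integers.
-/

open MvPolynomial

theorem Int.exists_sq_add_sq_add_sq_add_sq_eq {m : ℤ} (hm : 0 ≤ m) :
    ∃ a b c d : ℤ, a ^ 2 + b ^ 2 + c ^ 2 + d ^ 2 = m := by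
  obtain ⟨a, b, c, d, h⟩ := Nat.sum_four_squares m.toNat
  refine ⟨a, b, c, d, ?_⟩
  rw [← Int.toNat_of_nonneg hm]
  exact_mod_cast h

theorem exists_fin_five_iff_exists_nonneg (P : ℤ → ℤ → Prop) :
    (∃ a : Fin 5 → ℤ, P (a 0 ^ 2 + a 1 ^ 2 + a 2 ^ 2 + a 3 ^ 2) (a 4)) ↔
      ∃ s t : ℤ, 0 ≤ s ∧ P s t := by
  constructor
  · rintro ⟨a, ha⟩
    exact ⟨_, _, by positivity, ha⟩
  · rintro ⟨s, t, hs, hst⟩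
    obtain ⟨a, b, c, d, rfl⟩ := Int.exists_sq_add_sq_add_sq_add_sq_eq hs
    exact ⟨![a, b, c, d, t], hst⟩

theorem neg_sq_mul_add_one_sub_sq_mul_neg {s t k : ℤ} (hs : 0 ≤ s) (hk : 0 ≤ k) (ht : t ≠ 0) :
    -t ^ 2 * (s + 1) + (1 - t ^ 2) * (s + k + 1) < 0 := by
  have ht2 : 1 ≤ t ^ 2 := (one_le_sq_iff_one_le_abs t).2 (Int.one_le_abs ht)
  calc -t ^ 2 * (s + 1) + (1 - t ^ 2) * (s + k + 1)
      = s + k + 1 - t ^ 2 * (2 * s + k + 2) := by ring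
    _ ≤ s + k + 1 - 1 * (2 * s + k + 2) := by gcongr
    _ < 0 := by omega

theorem exists_neg_sq_mul_add_one_sub_sq_mul_eq_iff {k : ℤ} (hk : 0 ≤ k) (z : ℤ) :
    (∃ s t : ℤ, 0 ≤ s ∧ -t ^ 2 * (s + 1) + (1 - t ^ 2) * (s + k + 1) = z) ↔
      z < 0 ∨ k < z := by
  constructor
  · rintro ⟨s, t, hs, rfl⟩
    rcases eq_or_ne t 0 with rfl | ht
    · right
      linarith
    · exact .inl (neg_sq_mul_add_one_sub_sq_mul_neg hs hk ht)
  · rintro (hz | hz)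
    · exact ⟨-z - 1, 1, by omega, by ring⟩
    · exact ⟨z - k - 1, 0, by omega, by ring⟩

/-- The polynomial
`f = −x₅²(x₁² + x₂² + x₃² + x₄² + 1) + (1 − x₅²)(x₁² + x₂² + x₃² + x₄² + n + 1)`
has image on `ℤ⁵` exactly `ℤ ∖ [0, n]`, i.e. the set of integers `z` with `z < 0` or
`z > n`. -/
theorem image_of_complement_interval_poly (n : ℕ) :
    {z : ℤ | ∃ a : Fin 5 → ℤ,
      MvPolynomial.eval a
        (-(X 4) ^ 2 * ((X 0) ^ 2 + (X 1) ^ 2 + (X 2) ^ 2 + (X 3) ^ 2 + 1) +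
          (1 - (X 4) ^ 2) *
            ((X 0) ^ 2 + (X 1) ^ 2 + (X 2) ^ 2 + (X 3) ^ 2 + C (n : ℤ) + 1)) = z} =
    {z : ℤ | z < 0 ∨ (n : ℤ) < z} := by
  ext z
  simp only [Set.mem_ofPred_eq, map_add, map_mul, map_sub, map_neg, map_pow, map_one,
    eval_X, eval_C]
  exact (exists_fin_five_iff_exists_nonneg
    (fun s t ↦ -t ^ 2 * (s + 1) + (1 - t ^ 2) * (s + n + 1) = z)).trans
    (exists_neg_sq_mul_add_one_sub_sq_mul_eq_iff n.cast_nonneg z)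
end

section
/- Let k ≥ 1 and let n₁,…,n_k be non-negative integers. Then the complement in ℤ^k of the cuboid ∏_{i=1}^k [0, n_i] = {(a₁,…,a_k) ∈ ℤ^k : 0 ≤ a_i ≤ n_i for all i} is parametrizable by a k-tuple of polynomials with integer coefficients: there exist n and f = (f₁,…,f_k) ∈ (ℤ[x₁,…,x_n])^k with f(ℤ^n) = ℤ^k ∖ ∏_{i=1}^k [0, n_i]. -/
/-!
The complement `C_{k+1}` of a cuboid in `ℤ^{k+1}` is `(ℤ ∖ [0, N₀]) × ℤ^k ∪ ℤ × C_k`, so we induct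
on `k`. The union is realised by a switch variable `c`: if `g(x)` parametrizes `C_k`, take
`(y + c² (t (N₀ + 2 + 2w + 2y²) - 1 - w - y²), g(x) + c u)` with `w` a sum of four squares.
For `c = 0` this is `(y, g(x))`. For `c ≠ 0` the first coordinate lies below `0` if `t ≤ 0` and
above `N₀` if `t ≥ 1`, while `c = 1` leaves the remaining coordinates free.
-/

open MvPolynomial

def IsIntPolyImage {ι : Type*} (S : Set (ι → ℤ)) : Prop :=
  ∃ (n : ℕ) (f : ι → MvPolynomial (Fin n) ℤ), Set.range (fun a i => eval a (f i)) = S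

theorem IsIntPolyImage.of_range {σ ι : Type*} [Fintype σ] (f : ι → MvPolynomial σ ℤ) :
    IsIntPolyImage (Set.range fun (a : σ → ℤ) i => eval a (f i)) := by
  let e := Fintype.equivFin σ
  refine ⟨Fintype.card σ, fun i => rename e (f i), ?_⟩
  simp only [eval_rename]
  exact (e.arrowCongr (Equiv.refl ℤ)).symm.surjective.range_comp fun a i => eval a (f i)

theorem Int.exists_sum_four_sq_eq {z : ℤ} (hz : 0 ≤ z) : ∃ a : Fin 4 → ℤ, ∑ i, a i ^ 2 = z := by
  lift z to ℕ using hz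
  obtain ⟨a, b, c, d, h⟩ := Nat.sum_four_squares z
  exact ⟨![a, b, c, d], by simp [Fin.sum_univ_four, ← h]⟩

section Escape

variable {R : Type*} [CommRing R]

def escapeIcc (N t w y c : R) : R :=
  y + c ^ 2 * (t * (N + 2 + 2 * w + 2 * y ^ 2) - 1 - w - y ^ 2)

@[simp]
theorem escapeIcc_zero (N t w y : R) : escapeIcc N t w y 0 = y := by
  simp [escapeIcc]

@[simp]
theorem map_escapeIcc {S F : Type*} [CommRing S] [FunLike F R S] [RingHomClass F R S] (φ : F)
    (N t w y c : R) :
    φ (escapeIcc N t w y c) = escapeIcc (φ N) (φ t) (φ w) (φ y) (φ c) := by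
  simp [escapeIcc, map_ofNat]

theorem escapeIcc_notMem_Icc {N t w y c : ℤ} (hN : 0 ≤ N) (hw : 0 ≤ w) (hc : c ≠ 0) :
    escapeIcc N t w y c ∉ Set.Icc 0 N := by
  have hc2 : 1 ≤ c ^ 2 := by have := sq_pos_of_ne_zero hc; omega
  have hy : y ≤ y ^ 2 := by nlinarith
  have hy' : 0 ≤ y ^ 2 + y := by nlinarith
  rw [Set.mem_Icc, not_and_or, not_le, not_le]
  unfold escapeIcc
  rcases le_or_gt t 0 with ht | ht
  · left
    have : t * (N + 2 + 2 * w + 2 * y ^ 2) ≤ 0 := mul_nonpos_of_nonpos_of_nonneg ht (by positivity)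
    nlinarith
  · right
    have : N + 2 + 2 * w + 2 * y ^ 2 ≤ t * (N + 2 + 2 * w + 2 * y ^ 2) :=
      le_mul_of_one_le_left (by positivity) ht
    nlinarith

theorem exists_escapeIcc_eq {N z : ℤ} (hz : z ∉ Set.Icc 0 N) :
    ∃ t w, 0 ≤ w ∧ escapeIcc N t w 0 1 = z := by
  rw [Set.mem_Icc, not_and_or, not_le, not_le] at hz
  rcases hz with hz | hz
  · exact ⟨0, -1 - z, by omega, by unfold escapeIcc; ring⟩
  · exact ⟨1, z - N - 1, by omega, by unfold escapeIcc; ring⟩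

end Escape

theorem Fin.mem_Icc_iff_tail {α : Type*} [Preorder α] {k : ℕ} {a b v : Fin (k + 1) → α} :
    v ∈ Set.Icc a b ↔
      v 0 ∈ Set.Icc (a 0) (b 0) ∧ Fin.tail v ∈ Set.Icc (Fin.tail a) (Fin.tail b) := by
  simp only [Set.mem_Icc, Pi.le_def, Fin.forall_fin_succ, Fin.tail]
  tauto

theorem IsIntPolyImage.cons_union {k : ℕ} {S : Set (Fin k → ℤ)} (hS : IsIntPolyImage S) (N : ℕ) :
    IsIntPolyImage {v : Fin (k + 1) → ℤ | v 0 ∉ Set.Icc 0 (N : ℤ) ∨ Fin.tail v ∈ S} := by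
  obtain ⟨n, g, rfl⟩ := hS
  let y : MvPolynomial (Fin n ⊕ Fin k ⊕ Fin 3 ⊕ Fin 4) ℤ := X (.inr (.inr (.inl 0)))
  let c : MvPolynomial (Fin n ⊕ Fin k ⊕ Fin 3 ⊕ Fin 4) ℤ := X (.inr (.inr (.inl 1)))
  let t : MvPolynomial (Fin n ⊕ Fin k ⊕ Fin 3 ⊕ Fin 4) ℤ := X (.inr (.inr (.inl 2)))
  let w : MvPolynomial (Fin n ⊕ Fin k ⊕ Fin 3 ⊕ Fin 4) ℤ := ∑ i, X (.inr (.inr (.inr i))) ^ 2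
  let f : Fin (k + 1) → MvPolynomial (Fin n ⊕ Fin k ⊕ Fin 3 ⊕ Fin 4) ℤ :=
    Fin.cons (escapeIcc (N : MvPolynomial _ ℤ) t w y c) fun j =>
      rename Sum.inl (g j) + c * X (.inr (.inl j))
  convert IsIntPolyImage.of_range f using 1
  ext v
  constructor
  · rintro (hv | ⟨x, hx⟩)
    · obtain ⟨t₀, w₀, hw₀, hv⟩ := exists_escapeIcc_eq hv
      obtain ⟨sq, rfl⟩ := Int.exists_sum_four_sq_eq hw₀
      refine ⟨Sum.elim 0 (Sum.elim (fun j => v j.succ - eval 0 (g j)) (Sum.elim ![0, 1, t₀] sq)),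
        ?_⟩
      ext i
      refine Fin.cases ?_ (fun j => ?_) i
      · simpa [f, y, c, t, w] using hv
      · simp [f, c, eval_rename]
    · refine ⟨Sum.elim x (Sum.elim 0 (Sum.elim ![v 0, 0, 0] 0)), ?_⟩
      ext i
      refine Fin.cases ?_ (fun j => ?_) i
      · simp [f, y, c]
      · simpa [f, c, eval_rename, Fin.tail] using congrFun hx j
  · rintro ⟨a, rfl⟩
    by_cases hc : a (.inr (.inr (.inl 1))) = 0
    · right
      exact ⟨a ∘ Sum.inl, by ext j; simp [f, c, hc, Fin.tail, eval_rename]⟩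
    · left
      simpa [f, y, c, t, w] using escapeIcc_notMem_Icc (Nat.cast_nonneg N) (by positivity) hc

theorem isIntPolyImage_notMem_Icc (N : ℕ) :
    IsIntPolyImage {v : Fin 1 → ℤ | v 0 ∉ Set.Icc 0 (N : ℤ)} := by
  let t : MvPolynomial (Unit ⊕ Fin 4) ℤ := X (.inl ())
  let w : MvPolynomial (Unit ⊕ Fin 4) ℤ := ∑ i, X (.inr i) ^ 2
  convert IsIntPolyImage.of_range fun _ : Fin 1 => escapeIcc (N : MvPolynomial _ ℤ) t w 0 1 using 1
  ext v
  constructor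
  · intro hv
    obtain ⟨t₀, w₀, hw₀, hv⟩ := exists_escapeIcc_eq hv
    obtain ⟨sq, rfl⟩ := Int.exists_sum_four_sq_eq hw₀
    exact ⟨Sum.elim (fun _ => t₀) sq, by ext i; fin_cases i; simpa [t, w] using hv⟩
  · rintro ⟨a, rfl⟩
    simpa [t, w] using escapeIcc_notMem_Icc (Nat.cast_nonneg N) (by positivity) one_ne_zero

theorem isIntPolyImage_compl_Icc :
    ∀ (k : ℕ) (N : Fin (k + 1) → ℕ), IsIntPolyImage (Set.Icc 0 fun i => (N i : ℤ))ᶜ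
  | 0, N => by
    convert isIntPolyImage_notMem_Icc (N 0) using 1
    ext v
    simp [Pi.le_def, Fin.forall_fin_one]
  | k + 1, N => by
    convert (isIntPolyImage_compl_Icc k (Fin.tail N)).cons_union (N 0) using 1
    ext v
    rw [Set.mem_compl_iff, Fin.mem_Icc_iff_tail, not_and_or]
    rfl

/-- The complement in `ℤ^k` (`k ≥ 1`) of a cuboid `∏_{i=1}^k [0, n_i]` is
parametrizable by a `k`-tuple of polynomials with integer coefficients. -/
theorem complement_of_cuboid_int_poly_param (k : ℕ) (hk : 1 ≤ k) (N : Fin k → ℕ) :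
    ∃ (n : ℕ) (f : Fin k → MvPolynomial (Fin n) ℤ),
      {v : Fin k → ℤ | ∃ a : Fin n → ℤ, ∀ i, MvPolynomial.eval a (f i) = v i} =
        {v : Fin k → ℤ | ¬ ∀ i, 0 ≤ v i ∧ v i ≤ (N i : ℤ)} := by
  obtain ⟨k, rfl⟩ := Nat.exists_eq_add_of_le' hk
  obtain ⟨n, f, hf⟩ := isIntPolyImage_compl_Icc k N
  refine ⟨n, f, ?_⟩
  simpa [Set.ext_iff, funext_iff, Pi.le_def, forall_and] using hf
end

section
/- Let n₁,…,n_k be non-negative integers and let g = (g₁,…,g_k) be a k-tuple of polynomials with integer coefficients in variables x₁,…,x_n whose image g(ℤ^n) contains ℤ^k ∖ ∏_{i=1}^k [0, n_i] but does not contain the point 0 ∈ ℤ^k. Let c ∈ ∏_{i=1}^k [0, n_i] and let t be a positive integer with 2^{2t−2} > max_i n_i. Define the k-tuple h in the variables x₁,…,x_n and a new variable w by h = w^{2t}·g + (1 − w²)·c, i.e., h_i = w^{2t} g_i + (1 − w²) c_i for each i. Then the image of h on ℤ^{n+1} is exactly g(ℤ^n) ∪ {c}. -/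
/-!
Split according to the value of the new variable `w`. At `w = 0` the tuple `h` takes the value
`c`, and at `w = ±1` it agrees with `g`. For `|w| ≥ 2` some coordinate `u = gᵢ(a)` is nonzero,
because `0 ∉ g(ℤⁿ)`, and then `w^{2t} u + (1 - w²) cᵢ` leaves `[0, nᵢ]`: it is negative when
`u ≤ -1`, and exceeds `nᵢ` when `u ≥ 1` because `w^{2t} > w² nᵢ` as `w^{2t-2} ≥ 2^{2t-2} > nᵢ`.
Hence `h(a, w)` lies outside the cuboid, so in `g(ℤⁿ)` by hypothesis.
-/

lemma Int.eq_zero_or_sq_eq_one_or_two_le_abs (w : ℤ) : w = 0 ∨ w ^ 2 = 1 ∨ 2 ≤ |w| := by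
  rcases lt_trichotomy |w| 1 with h | h | h
  · exact Or.inl (abs_lt_one_iff.mp h)
  · exact Or.inr (Or.inl (by rw [← sq_abs, h, one_pow]))
  · exact Or.inr (Or.inr h)

lemma mul_lt_pow_of_lt_two_pow {w N : ℤ} {t : ℕ} (hw : 2 ≤ |w|) (ht : 0 < t)
    (hN : N < 2 ^ (2 * t - 2)) : w ^ 2 * N < w ^ (2 * t) := by
  have hsplit : w ^ (2 * t) = w ^ 2 * w ^ (2 * t - 2) := by
    rw [← pow_add]; congr 1; omega
  have hlow : (2 : ℤ) ^ (2 * t - 2) ≤ w ^ (2 * t - 2) := by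
    rw [← (Even.pow_abs ⟨t - 1, by omega⟩ w)]
    exact pow_le_pow_left₀ (by norm_num) hw _
  rw [hsplit]
  exact mul_lt_mul_of_pos_left (hN.trans_le hlow) (by nlinarith [sq_abs w])

lemma mul_add_one_sub_mul_notMem_Icc {A B N c u : ℤ} (hB : 1 ≤ B) (hA : B * N < A)
    (hc : 0 ≤ c ∧ c ≤ N) (hu : u ≠ 0) : A * u + (1 - B) * c ∉ Set.Icc 0 N := by
  rintro ⟨hlow, hhigh⟩
  have hBc : (B - 1) * c ≤ (B - 1) * N := mul_le_mul_of_nonneg_left hc.2 (by omega)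
  rcases hu.lt_or_gt with hneg | hpos
  · nlinarith [mul_nonneg (sub_nonneg.mpr hB) hc.1]
  · have hA0 : 0 ≤ A := by nlinarith
    nlinarith [mul_nonneg hA0 (show 0 ≤ u - 1 by omega)]

/-- Adding one value to the range: if the image of the `k`-tuple `g` of integer
polynomials contains `ℤ^k ∖ ∏ᵢ [0, nᵢ]` but not `0`, `c` lies in the cuboid
`∏ᵢ [0, nᵢ]`, and `t ≥ 1` satisfies `2^(2t−2) > maxᵢ nᵢ`, then the `k`-tuple
`h = w^{2t}·g + (1 − w²)·c` (in one extra variable `w`) has image exactly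
`g(ℤ^n) ∪ {c}`. -/
theorem add_one_value_to_range (k n : ℕ) (N : Fin k → ℕ)
    (g : Fin k → MvPolynomial (Fin n) ℤ) (c : Fin k → ℤ) (t : ℕ)
    (hsub : {v : Fin k → ℤ | ¬ ∀ i, 0 ≤ v i ∧ v i ≤ (N i : ℤ)} ⊆
      {v : Fin k → ℤ | ∃ a : Fin n → ℤ, ∀ i, MvPolynomial.eval a (g i) = v i})
    (h0 : (0 : Fin k → ℤ) ∉
      {v : Fin k → ℤ | ∃ a : Fin n → ℤ, ∀ i, MvPolynomial.eval a (g i) = v i})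
    (hc : ∀ i, 0 ≤ c i ∧ c i ≤ (N i : ℤ))
    (ht : 0 < t) (ht2 : ∀ i, (N i : ℤ) < 2 ^ (2 * t - 2)) :
    {v : Fin k → ℤ | ∃ (a : Fin n → ℤ) (w : ℤ),
      ∀ i, v i = w ^ (2 * t) * MvPolynomial.eval a (g i) + (1 - w ^ 2) * c i} =
    {v : Fin k → ℤ | ∃ a : Fin n → ℤ, ∀ i, MvPolynomial.eval a (g i) = v i} ∪ {c} := by
  ext v
  simp only [Set.mem_ofPred_eq, Set.mem_union, Set.mem_singleton_iff]
  constructor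
  · rintro ⟨a, w, hv⟩
    rcases w.eq_zero_or_sq_eq_one_or_two_le_abs with rfl | hw | hw
    · exact Or.inr (funext fun i => by simp [hv, zero_pow (by omega : 2 * t ≠ 0)])
    · exact Or.inl ⟨a, fun i => by simp [hv, pow_mul, hw]⟩
    · refine Or.inl (hsub fun hall => ?_)
      obtain ⟨i, hi⟩ : ∃ i, MvPolynomial.eval a (g i) ≠ 0 := by
        by_contra! h
        exact h0 ⟨a, h⟩
      have hw2 : 1 ≤ w ^ 2 := by nlinarith [sq_abs w]
      exact mul_add_one_sub_mul_notMem_Icc hw2 (mul_lt_pow_of_lt_two_pow hw ht (ht2 i)) (hc i) hi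
        (hv i ▸ hall i)
  · rintro (⟨a, ha⟩ | rfl)
    · exact ⟨a, 1, fun i => by simp [ha]⟩
    · exact ⟨0, 0, fun i => by simp [zero_pow (by omega : 2 * t ≠ 0)]⟩
end
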